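/- Let n ≥ 3 and let W° = {±1}°^n ⋊ S_n be the group of coordinate permutations of ℝ^n combined with an even number of sign changes. Let c = (1/2, …, 1/2); its stabilizer in W° is the symmetric group S_n acting by permutation of coordinates. Then every S_n-invariant polynomial function on ℝ^n lies in the ℝ-subalgebra generated by the W°-invariant polynomial functions f together with their translates v ↦ f(v + c). -/

import Mathlib

open scoped RealInnerProductSpace

/-- The signed permutation `(ε, σ)` acting on `ℝ^n`: `x ↦ (ε i * x (σ i))_i`. -/
noncomputable def sgnPerm {n : ℕ} (ε : Fin n → ℝ) (σ : Equiv.Perm (Fin n))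
    (x : EuclideanSpace ℝ (Fin n)) : EuclideanSpace ℝ (Fin n) :=
  (WithLp.toLp 2 (fun i => ε i * x (σ i)) : EuclideanSpace ℝ (Fin n))

/-- A polynomial function on a real vector space `M`: an element of the `ℝ`-subalgebra of
`M → ℝ` generated by the linear functionals. -/
def IsPolyFun {M : Type*} [AddCommGroup M] [Module ℝ M] (f : M → ℝ) : Prop :=
  f ∈ Algebra.adjoin ℝ {g : M → ℝ | ∃ l : M →ₗ[ℝ] ℝ, g = ⇑l}

/-- Invariance of `f : ℝ^n → ℝ` under the group `W = {±1}^n ⋊ S_n` of all signed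
permutations of the coordinates. -/
def IsWInv {n : ℕ} (f : EuclideanSpace ℝ (Fin n) → ℝ) : Prop :=
  ∀ (ε : Fin n → ℝ), (∀ i, ε i = 1 ∨ ε i = -1) → ∀ σ : Equiv.Perm (Fin n),
    ∀ x, f (sgnPerm ε σ x) = f x

/-- Invariance of `f : ℝ^n → ℝ` under the group `W° = {±1}°^n ⋊ S_n` of signed
permutations with an even number of sign changes (`∏ ε i = 1`). -/
def IsW0Inv {n : ℕ} (f : EuclideanSpace ℝ (Fin n) → ℝ) : Prop :=
  ∀ (ε : Fin n → ℝ), (∀ i, ε i = 1 ∨ ε i = -1) → (∏ i, ε i = 1) →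
    ∀ σ : Equiv.Perm (Fin n), ∀ x, f (sgnPerm ε σ x) = f x

open MvPolynomial Finset

/-! Over a field of characteristic zero the symmetric polynomials are generated by the power sums
`p_k = ∑ i, x_i ^ k` (fundamental theorem plus Newton's identities). The even power sums are
`W`-invariant. For odd `k`, the binomial expansion of the translate `p_(k+1) (x + c)` is
`p_(k+1) + (k + 1)/2 • p_k + (a combination of the p_j with j < k)`, so by strong induction on `k`
every power sum lies in the algebra generated by the `W°`-invariants and their translates. -/

namespace MvPolynomial

theorem symmetricSubalgebra_le_adjoin_range_esymm {σ R : Type*} [Fintype σ] [CommRing R] :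
    symmetricSubalgebra σ R ≤ Algebra.adjoin R (Set.range (esymm σ R)) := by
  intro P hP
  obtain ⟨Q, hQ⟩ := esymmAlgHom_surjective R le_rfl ⟨P, hP⟩
  have hPQ : P = aeval (fun i : Fin (Fintype.card σ) => esymm σ R (i + 1)) Q := by
    rw [← esymmAlgHom_apply, hQ]
  rw [hPQ]
  refine Algebra.adjoin_mono ?_ ((Algebra.adjoin_range_eq_range_aeval R _).ge ⟨Q, rfl⟩)
  rintro _ ⟨i, rfl⟩
  exact ⟨i + 1, rfl⟩

noncomputable def translateBy {σ R : Type*} [CommSemiring R] (t : R) :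
    MvPolynomial σ R →ₐ[R] MvPolynomial σ R :=
  aeval fun i => X i + C t

theorem translateBy_psum {σ R : Type*} [Fintype σ] [CommSemiring R] (t : R) (m : ℕ) :
    translateBy t (psum σ R m) = ∑ j ∈ range (m + 1), (m.choose j * t ^ (m - j)) • psum σ R j := by
  simp only [translateBy, psum, map_sum, map_pow, aeval_X, add_pow, smul_sum]
  rw [sum_comm]
  refine sum_congr rfl fun j _ => sum_congr rfl fun i _ => ?_
  rw [smul_eq_C_mul, map_mul, map_pow, map_natCast]
  ring

section CharZero

variable {σ K : Type*} [Fintype σ] [Field K] [CharZero K]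

theorem esymm_mem_adjoin_range_psum (k : ℕ) :
    esymm σ K k ∈ Algebra.adjoin K (Set.range (psum σ K)) := by
  set S := Algebra.adjoin K (Set.range (psum σ K))
  induction k using Nat.strong_induction_on with
  | _ k ih =>
    rcases k.eq_zero_or_pos with rfl | hk
    · rw [esymm_zero]; exact S.one_mem
    have hmul : (k : K) • esymm σ K k ∈ S := by
      rw [Nat.cast_smul_eq_nsmul, nsmul_eq_mul, mul_esymm_eq_sum]
      refine S.mul_mem (S.pow_mem (S.neg_mem S.one_mem) _) (S.sum_mem fun a ha => ?_)
      exact S.mul_mem (S.mul_mem (S.pow_mem (S.neg_mem S.one_mem) _) (ih a.1 (mem_filter.1 ha).2))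
        (Algebra.subset_adjoin ⟨a.2, rfl⟩)
    exact (Submodule.smul_mem_iff (Subalgebra.toSubmodule S) (Nat.cast_ne_zero.2 hk.ne')).1 hmul

theorem adjoin_range_psum_eq_symmetricSubalgebra :
    Algebra.adjoin K (Set.range (psum σ K)) = symmetricSubalgebra σ K := by
  refine le_antisymm (Algebra.adjoin_le ?_) (symmetricSubalgebra_le_adjoin_range_esymm.trans ?_)
  · rintro _ ⟨k, rfl⟩
    exact psum_isSymmetric σ K k
  · refine Algebra.adjoin_le ?_
    rintro _ ⟨k, rfl⟩
    exact esymm_mem_adjoin_range_psum k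

theorem psum_mem_of_even_psum_mem {S : Subalgebra K (MvPolynomial σ K)} {t : K} (ht : t ≠ 0)
    (hpsum : ∀ k, Even k → psum σ K k ∈ S)
    (htrans : ∀ k, Even k → translateBy t (psum σ K k) ∈ S) (k : ℕ) : psum σ K k ∈ S := by
  induction k using Nat.strong_induction_on with
  | _ k ih =>
    rcases Nat.even_or_odd k with hk | hk
    · exact hpsum k hk
    have hk1 : Even (k + 1) := hk.add_one
    have hcoeff : ((k + 1).choose k * t ^ (k + 1 - k) : K) ≠ 0 := by
      rw [Nat.choose_succ_self_right, Nat.add_sub_cancel_left, pow_one]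
      exact mul_ne_zero (Nat.cast_ne_zero.2 k.succ_ne_zero) ht
    have hrest : ∑ j ∈ (range (k + 2)).erase k,
        ((k + 1).choose j * t ^ (k + 1 - j) : K) • psum σ K j ∈ S := by
      refine S.sum_mem fun j hj => S.smul_mem ?_ _
      rw [mem_erase, mem_range] at hj
      rcases eq_or_ne j (k + 1) with rfl | hj'
      · exact hpsum _ hk1
      · exact ih j (by omega)
    have hsplit := htrans _ hk1
    rw [translateBy_psum, ← add_sum_erase _ _ (mem_range.2 (by omega : k < k + 1 + 1))] at hsplit
    exact (Submodule.smul_mem_iff (Subalgebra.toSubmodule S) hcoeff).1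
      ((add_mem_cancel_right hrest).1 hsplit)

theorem symmetricSubalgebra_le_of_even_psum_mem {S : Subalgebra K (MvPolynomial σ K)} {t : K}
    (ht : t ≠ 0) (hpsum : ∀ k, Even k → psum σ K k ∈ S)
    (htrans : ∀ k, Even k → translateBy t (psum σ K k) ∈ S) :
    symmetricSubalgebra σ K ≤ S := by
  rw [← adjoin_range_psum_eq_symmetricSubalgebra]
  refine Algebra.adjoin_le ?_
  rintro _ ⟨k, rfl⟩
  exact psum_mem_of_even_psum_mem ht hpsum htrans k

end CharZero

end MvPolynomial

section PolynomialFunctions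

variable {ι : Type*}

noncomputable def polyEval : MvPolynomial ι ℝ →ₐ[ℝ] (EuclideanSpace ℝ ι → ℝ) :=
  aeval fun i x => x i

theorem polyEval_apply (P : MvPolynomial ι ℝ) (x : EuclideanSpace ℝ ι) :
    polyEval P x = eval x.ofLp P := by
  induction P using MvPolynomial.induction_on with
  | C a => simp [polyEval]
  | add p q hp hq => simp [hp, hq]
  | mul_X p i hp => rw [map_mul, Pi.mul_apply, hp]; simp [polyEval]

theorem adjoin_linearMap_eq_range_polyEval [Fintype ι] :
    Algebra.adjoin ℝ {g : EuclideanSpace ℝ ι → ℝ | ∃ l : EuclideanSpace ℝ ι →ₗ[ℝ] ℝ, g = ⇑l} =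
      (polyEval (ι := ι)).range := by
  classical
  rw [polyEval, ← Algebra.adjoin_range_eq_range_aeval]
  refine le_antisymm (Algebra.adjoin_le ?_) (Algebra.adjoin_mono ?_)
  · rintro _ ⟨l, rfl⟩
    have hl : ⇑l = ∑ i, l (EuclideanSpace.single i 1) • fun x : EuclideanSpace ℝ ι => x i := by
      ext x
      conv_lhs => rw [← (EuclideanSpace.basisFun ι ℝ).sum_repr x]
      simp [mul_comm]
    rw [hl]
    exact Subalgebra.sum_mem _ fun i _ =>
      Subalgebra.smul_mem _ (Algebra.subset_adjoin (Set.mem_range_self i)) _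
  · rintro _ ⟨i, rfl⟩
    exact ⟨(EuclideanSpace.proj i : EuclideanSpace ℝ ι →L[ℝ] ℝ).toLinearMap, rfl⟩

theorem isPolyFun_iff [Fintype ι] {f : EuclideanSpace ℝ ι → ℝ} :
    IsPolyFun f ↔ ∃ P, polyEval P = f := by
  rw [IsPolyFun, adjoin_linearMap_eq_range_polyEval, AlgHom.mem_range]

theorem polyEval_psum_apply [Fintype ι] (k : ℕ) (x : EuclideanSpace ℝ ι) :
    polyEval (psum ι ℝ k) x = ∑ i, x i ^ k := by
  simp [polyEval_apply, psum]

theorem polyEval_translateBy {c : EuclideanSpace ℝ ι} {t : ℝ} (hc : ∀ i, c i = t)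
    (P : MvPolynomial ι ℝ) (v : EuclideanSpace ℝ ι) :
    polyEval (translateBy t P) v = polyEval P (v + c) := by
  induction P using MvPolynomial.induction_on with
  | C a => simp [translateBy]
  | add p q hp hq => simp [hp, hq]
  | mul_X p i hp =>
    rw [map_mul, map_mul, Pi.mul_apply, hp]
    simp [translateBy, polyEval_apply, hc]

end PolynomialFunctions

theorem IsWInv.isW0Inv {n : ℕ} {f : EuclideanSpace ℝ (Fin n) → ℝ} (hf : IsWInv f) : IsW0Inv f :=
  fun ε hε _ => hf ε hε

theorem isWInv_polyEval_psum {n k : ℕ} (hk : Even k) : IsWInv (polyEval (psum (Fin n) ℝ k)) := by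
  intro ε hε σ x
  simp only [polyEval_psum_apply, sgnPerm, mul_pow]
  have hεk : ∀ i, ε i ^ k = 1 := fun i => by rcases hε i with h | h <;> simp [h, hk.neg_one_pow]
  simp only [hεk, one_mul]
  exact Equiv.sum_comp σ fun i => x i ^ k

theorem isSymmetric_of_forall_sgnPerm_one {n : ℕ} {P : MvPolynomial (Fin n) ℝ}
    (h : ∀ σ : Equiv.Perm (Fin n), ∀ x, polyEval P (sgnPerm (fun _ => 1) σ x) = polyEval P x) :
    P.IsSymmetric := fun σ => MvPolynomial.funext fun x => by
  simpa [polyEval_apply, sgnPerm, eval_rename, Function.comp_def] using h σ (WithLp.toLp 2 x)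

theorem Dn_stabilizer_of_c_invariants_generated_general
    (n : ℕ)
    (c : EuclideanSpace ℝ (Fin n))
    (hc : ∀ i : Fin n, c i = (1 : ℝ) / 2)
    (f : EuclideanSpace ℝ (Fin n) → ℝ) (hf : IsPolyFun f)
    -- `f` is invariant under the stabilizer of `c` in `W°`, which is `S_n`
    (hinv : ∀ σ : Equiv.Perm (Fin n), ∀ x, f (sgnPerm (fun _ => 1) σ x) = f x) :
    f ∈ Algebra.adjoin ℝ
      ({g : EuclideanSpace ℝ (Fin n) → ℝ | IsPolyFun g ∧ IsW0Inv g} ∪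
       {g : EuclideanSpace ℝ (Fin n) → ℝ | ∃ h : EuclideanSpace ℝ (Fin n) → ℝ,
          (IsPolyFun h ∧ IsW0Inv h) ∧ g = fun v => h (v + c)}) := by
  obtain ⟨P, rfl⟩ := isPolyFun_iff.1 hf
  have hgen : ∀ k, Even k →
      IsPolyFun (polyEval (psum (Fin n) ℝ k)) ∧ IsW0Inv (polyEval (psum (Fin n) ℝ k)) :=
    fun k hk => ⟨isPolyFun_iff.2 ⟨_, rfl⟩, (isWInv_polyEval_psum hk).isW0Inv⟩
  refine (Subalgebra.mem_comap _ polyEval P).1 <| symmetricSubalgebra_le_of_even_psum_mem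
    (t := 1 / 2) (by norm_num) (fun k hk => ?_) (fun k hk => ?_)
    (isSymmetric_of_forall_sgnPerm_one hinv)
  · exact Algebra.subset_adjoin (Or.inl (hgen k hk))
  · exact Algebra.subset_adjoin (Or.inr ⟨_, hgen k hk, funext (polyEval_translateBy hc _)⟩)

theorem Dn_stabilizer_of_c_invariants_generated
    (n : ℕ) (hn : 3 ≤ n)
    (c : EuclideanSpace ℝ (Fin n))
    (hc : ∀ i : Fin n, c i = (1 : ℝ) / 2)
    (f : EuclideanSpace ℝ (Fin n) → ℝ) (hf : IsPolyFun f)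
    -- `f` is invariant under the stabilizer of `c` in `W°`, which is `S_n`
    (hinv : ∀ σ : Equiv.Perm (Fin n), ∀ x, f (sgnPerm (fun _ => 1) σ x) = f x) :
    f ∈ Algebra.adjoin ℝ
      ({g : EuclideanSpace ℝ (Fin n) → ℝ | IsPolyFun g ∧ IsW0Inv g} ∪
       {g : EuclideanSpace ℝ (Fin n) → ℝ | ∃ h : EuclideanSpace ℝ (Fin n) → ℝ,
          (IsPolyFun h ∧ IsW0Inv h) ∧ g = fun v => h (v + c)}) :=
  Dn_stabilizer_of_c_invariants_generated_general n c hc f hf hinv
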